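/- arXiv:0707.1918 — 3 statements merged into one kernel-verified Lean document; each statement's English description precedes it below -/
import Mathlib

section
/- With Kalman gain K = P Hᵀ (H P Hᵀ + R)⁻¹ where P is symmetric positive semidefinite and R is symmetric positive definite, the updated covariance (I − K H) P is symmetric. -/
open Matrix

theorem stmt_1 {n m : ℕ} (P : Matrix (Fin n) (Fin n) ℝ) (hP : P.PosSemidef)
    (H : Matrix (Fin m) (Fin n) ℝ) (R : Matrix (Fin m) (Fin m) ℝ) (hR : R.PosDef)
    (K : Matrix (Fin n) (Fin m) ℝ) (hK : K = P * Hᵀ * (H * P * Hᵀ + R)⁻¹) :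
    ((1 - K * H) * P).IsSymm := by
  have hPt : Pᵀ = P := hP.isHermitian.eq
  have hS : (H * P * Hᵀ + R).PosDef := by
    have := (hP.mul_mul_conjTranspose_same H)
    simp only [conjTranspose_eq_transpose_of_trivial] at this
    exact Matrix.PosDef.posSemidef_add this hR
  have hSt : (H * P * Hᵀ + R)⁻¹ᵀ = (H * P * Hᵀ + R)⁻¹ := by
    rw [transpose_nonsing_inv]
    congr 1
    have hRt : Rᵀ = R := hR.isHermitian.eq
    simp [transpose_add, transpose_mul, hPt, hRt, Matrix.mul_assoc]
  subst hK
  unfold Matrix.IsSymm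
  simp only [sub_mul, one_mul, transpose_sub, transpose_mul, transpose_transpose, hPt, hSt]
  rw [Matrix.mul_assoc, Matrix.mul_assoc, Matrix.mul_assoc, Matrix.mul_assoc]
end

section
/- With Kalman gain K = P Hᵀ (H P Hᵀ + R)⁻¹ where P is symmetric positive semidefinite and R is symmetric positive definite, the updated covariance (I − K H) P is positive semidefinite. -/
open Matrix

theorem stmt_2 {n m : ℕ} (P : Matrix (Fin n) (Fin n) ℝ) (hP : P.PosSemidef)
    (H : Matrix (Fin m) (Fin n) ℝ) (R : Matrix (Fin m) (Fin m) ℝ) (hR : R.PosDef)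
    (K : Matrix (Fin n) (Fin m) ℝ) (hK : K = P * Hᵀ * (H * P * Hᵀ + R)⁻¹) :
    ((1 - K * H) * P).PosSemidef := by
  have hPt : Pᵀ = P := hP.isHermitian
  have hS : (H * P * Hᵀ + R).PosDef := by
    have h1 : (H * P * Hᵀ).PosSemidef := by
      simpa using hP.mul_mul_conjTranspose_same H
    exact Matrix.PosDef.posSemidef_add h1 hR
  have hdet : IsUnit (H * P * Hᵀ + R).det :=
    isUnit_iff_ne_zero.mpr (ne_of_gt hS.det_pos)
  have key : K * (H * P * Hᵀ + R) = P * Hᵀ := by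
    rw [hK, Matrix.mul_assoc (P * Hᵀ), nonsing_inv_mul _ hdet, Matrix.mul_one]
  have hJ : (1 - K * H) * P = (1 - K * H) * P * (1 - K * H)ᵀ + K * R * Kᵀ := by
    have expand : (1 - K * H) * P * (1 - K * H)ᵀ + K * R * Kᵀ
        = (1 - K * H) * P - P * Hᵀ * Kᵀ + (K * (H * P * Hᵀ + R)) * Kᵀ := by
      simp only [transpose_sub, transpose_one, transpose_mul, hPt, mul_sub, mul_one,
        sub_mul, one_mul, add_mul, mul_add]
      simp only [Matrix.mul_add, Matrix.add_mul, Matrix.mul_assoc]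
      abel
    rw [expand, key]
    abel
  rw [hJ]
  have h2 : ((1 - K * H) * P * (1 - K * H)ᵀ).PosSemidef := by
    rw [← conjTranspose_eq_transpose_of_trivial]
    exact hP.mul_mul_conjTranspose_same (1 - K * H)
  have h3 : (K * R * Kᵀ).PosSemidef := by
    rw [← conjTranspose_eq_transpose_of_trivial]
    exact hR.posSemidef.mul_mul_conjTranspose_same K
  exact h2.add h3
end

section
/- The scalar Kalman iteration p_{n+1} = (φ² · p_n r/(p_n + r)) + q with φ, r, q > 0 has at most one fixed point in [0, ∞), namely the positive root of the quadratic p² + p(r − q − φ² r) − q r = 0, and this root is unique and positive. -/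
theorem stmt_13 (φ q r : ℝ) (hφ : 0 < φ) (hq : 0 < q) (hr : 0 < r) :
    (∃! p : ℝ, 0 ≤ p ∧ φ ^ 2 * (p * r / (p + r)) + q = p) ∧
    (∀ p : ℝ, 0 ≤ p → φ ^ 2 * (p * r / (p + r)) + q = p →
      0 < p ∧ p ^ 2 + p * (r - q - φ ^ 2 * r) - q * r = 0) := by
  set b : ℝ := r - q - φ ^ 2 * r with hb
  have hD : 0 < b ^ 2 + 4 * (q * r) := by positivity
  set s : ℝ := Real.sqrt (b ^ 2 + 4 * (q * r)) with hs
  have hs2 : s ^ 2 = b ^ 2 + 4 * (q * r) := Real.sq_sqrt hD.le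
  have hsb : b < s := by
    nlinarith [Real.sqrt_nonneg (b ^ 2 + 4 * (q * r)), mul_pos hq hr, abs_nonneg b,
      sq_abs b, le_abs_self b]
  set p₀ : ℝ := (-b + s) / 2 with hp₀
  have hp₀pos : 0 < p₀ := by simp only [hp₀]; linarith
  have hquad : p₀ ^ 2 + p₀ * b - q * r = 0 := by
    simp only [hp₀]; linear_combination hs2 / 4
  -- for p ≥ 0, fixed point eq ↔ quadratic
  have key : ∀ p : ℝ, 0 ≤ p → (φ ^ 2 * (p * r / (p + r)) + q = p ↔
      p ^ 2 + p * b - q * r = 0) := by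
    intro p hp
    have hpr : p + r ≠ 0 := by positivity
    constructor
    · intro h; field_simp at h; nlinarith [h]
    · intro h; field_simp; nlinarith [h]
  have hfix : φ ^ 2 * (p₀ * r / (p₀ + r)) + q = p₀ := (key p₀ hp₀pos.le).2 hquad
  have huniq : ∀ p : ℝ, 0 ≤ p → φ ^ 2 * (p * r / (p + r)) + q = p → p = p₀ := by
    intro p hp heq
    have hq2 : p ^ 2 + p * b - q * r = 0 := (key p hp).1 heq
    have : (p - p₀) * (p + p₀ + b) = 0 := by nlinarith [hquad, hq2]
    rcases mul_eq_zero.1 this with h | h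
    · linarith
    · exfalso
      have hppos : 0 < p := by nlinarith [mul_pos hq hr]
      nlinarith
  constructor
  · exact ⟨p₀, ⟨hp₀pos.le, hfix⟩, fun p ⟨h1, h2⟩ => huniq p h1 h2⟩
  · intro p hp heq
    have := huniq p hp heq
    subst this
    exact ⟨hp₀pos, hquad⟩
end
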